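/- arXiv:1903.06086 — 6 statements merged into one kernel-verified Lean document; each statement's English description precedes it below -/
import Mathlib

section
/- Let H, K be Hilbert spaces with dim K = n < ∞, let {τₖ} be an orthonormal basis of H, and let A be the set of unit vectors in H⊗K of the form Σ_{k=1}^n τₖ ⊗ ψₖ with ψₖ ∈ K and Σ ‖ψₖ‖² = 1. Then every unit vector in H⊗K can be written as (U ⊗ I_K)φ for some unitary U on H and some φ ∈ A; moreover A is compact. -/
/-!
The components of a vector `x ∈ H^n` span a subspace `W` of dimension at most `n`. Extending an
orthonormal basis of `W` to a Hilbert basis of `H`, which is countably infinite because `H` is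
separable and infinite-dimensional, and enumerating it so that the basis of `W` comes first, gives
a Hilbert basis `b` with `W ⊆ span {b₀, …, b_{n-1}}`. The unitary `U` sending `τₖ` to `bₖ` then
moves all components of `x` into `span {τ₀, …, τ_{n-1}}`. Compactness holds because `A` is a
closed subset of a product of closed balls of a finite-dimensional space.
-/

noncomputable section

open Set Metric TopologicalSpace Module

theorem Set.Finite.exists_equiv_nat_subset_image_Iio {α : Type*} [Countable α] [Infinite α]
    {s : Set α} (hs : s.Finite) {n : ℕ} (hn : s.ncard ≤ n) : ∃ e : ℕ ≃ α, s ⊆ e '' Iio n := by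
  classical
  have : Finite s := hs.to_subtype
  let head : {k // k < s.ncard} ≃ {x // x ∈ s} :=
    Fin.equivSubtype.symm.trans (Finite.equivFinOfCardEq (Nat.card_coe_set_eq s)).symm
  have : Infinite {x // x ∉ s} := hs.infinite_compl.to_subtype
  have : Infinite {k // ¬ k < s.ncard} := (finite_Iio s.ncard).infinite_compl.to_subtype
  obtain ⟨tail⟩ : Nonempty ({k // ¬ k < s.ncard} ≃ {x // x ∉ s}) := nonempty_equiv_of_countable
  refine ⟨(Equiv.sumCompl _).symm.trans ((head.sumCongr tail).trans (Equiv.sumCompl _)),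
    fun x hx => ?_⟩
  obtain ⟨⟨k, hk⟩, hkx⟩ := head.surjective ⟨x, hx⟩
  refine ⟨k, hk.trans_le hn, ?_⟩
  rw [Equiv.trans_apply, Equiv.trans_apply,
    Equiv.sumCompl_symm_apply_of_pos (p := (· < s.ncard)) hk]
  simp [hkx]

section Compactness

variable {𝕜 : Type*} [NontriviallyNormedField 𝕜] [LocallyCompactSpace 𝕜]

theorem Submodule.isCompact_closedBall_inter {F : Type*} [NormedAddCommGroup F] [NormedSpace 𝕜 F]
    (S : Submodule 𝕜 F) [FiniteDimensional 𝕜 S] (r : ℝ) :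
    IsCompact (closedBall (0 : F) r ∩ S) := by
  have : ProperSpace S := FiniteDimensional.proper 𝕜 S
  have himage : ((↑) : S → F) '' closedBall 0 r = closedBall 0 r ∩ S := by
    ext x
    constructor
    · rintro ⟨y, hy, rfl⟩
      exact ⟨by simpa using hy, y.2⟩
    · rintro ⟨hx, hS⟩
      exact ⟨⟨x, hS⟩, by simpa using hx, rfl⟩
  exact himage ▸ (isCompact_closedBall _ _).image continuous_subtype_val

theorem PiLp.isCompact_setOf_norm_eq_and_forall_mem {ι : Type*} [Fintype ι] {p : ENNReal}
    [Fact (1 ≤ p)] {F : ι → Type*} [∀ i, NormedAddCommGroup (F i)] [∀ i, NormedSpace 𝕜 (F i)]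
    (S : ∀ i, Submodule 𝕜 (F i)) [∀ i, FiniteDimensional 𝕜 (S i)] (r : ℝ) :
    IsCompact {x : PiLp p F | ‖x‖ = r ∧ ∀ i, x i ∈ S i} := by
  have : ProperSpace 𝕜 := .of_locallyCompactSpace 𝕜
  refine ((isCompact_univ_pi fun i => (S i).isCompact_closedBall_inter r).image
    (PiLp.continuous_toLp p F)).of_isClosed_subset ?_ ?_
  · simp only [ofPred_and, ofPred_forall]
    exact (isClosed_eq continuous_norm continuous_const).inter <| isClosed_iInter fun i =>
      (S i).closed_of_finiteDimensional.preimage (PiLp.continuous_apply p F i)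
  · rintro x ⟨hx, hS⟩
    exact ⟨WithLp.ofLp x, fun i _ => ⟨by simpa [← hx] using PiLp.norm_apply_le x i, hS i⟩, rfl⟩

end Compactness

section HilbertSpace

variable {𝕜 E : Type*} [RCLike 𝕜] [NormedAddCommGroup E] [InnerProductSpace 𝕜 E]

theorem Orthonormal.dist_eq_sqrt_two {ι : Type*} {v : ι → E} (hv : Orthonormal 𝕜 v) {i j : ι}
    (hij : i ≠ j) : dist (v i) (v j) = √2 := by
  have : ‖v i - v j‖ ^ 2 = 2 := by
    rw [@norm_sub_sq 𝕜, hv.1, hv.1, hv.2 hij]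
    norm_num
  rw [dist_eq_norm, ← this, Real.sqrt_sq (norm_nonneg _)]

theorem Orthonormal.countable [SeparableSpace E] {ι : Type*} {v : ι → E}
    (hv : Orthonormal 𝕜 v) : Countable ι := by
  refine Pairwise.countable_of_isOpen_disjoint (s := fun i => ball (v i) (1 / 2))
    (fun i j hij => ball_disjoint_ball ?_) (fun _ => isOpen_ball)
    (fun _ => nonempty_ball.2 one_half_pos)
  rw [hv.dist_eq_sqrt_two hij]
  linarith [Real.one_lt_sqrt_two]

namespace HilbertBasis

theorem separableSpace {ι : Type*} [Countable ι] (b : HilbertBasis ι 𝕜 E) : SeparableSpace E := by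
  rw [← isSeparable_univ_iff, ← Submodule.top_coe (R := 𝕜), ← b.dense_span,
    Submodule.topologicalClosure_coe]
  exact (countable_range b).isSeparable.span.closure

theorem not_finiteDimensional {ι : Type*} [Infinite ι] (b : HilbertBasis ι 𝕜 E) :
    ¬ FiniteDimensional 𝕜 E := fun _ =>
  Module.Finite.not_linearIndependent_of_infinite _ b.orthonormal.linearIndependent

theorem infinite_of_not_finiteDimensional {ι : Type*} (b : HilbertBasis ι 𝕜 E)
    (hE : ¬ FiniteDimensional 𝕜 E) : Infinite ι := by
  refine not_finite_iff_infinite.1 fun _ => hE ?_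
  have : Fintype ι := .ofFinite ι
  exact .of_basis b.toOrthonormalBasis.toBasis

variable [CompleteSpace E]

def reindex {ι ι' : Type*} (b : HilbertBasis ι 𝕜 E) (e : ι ≃ ι') : HilbertBasis ι' 𝕜 E :=
  HilbertBasis.mk (b.orthonormal.comp e.symm e.symm.injective) <| by
    rw [range_comp, e.symm.range_eq_univ, image_univ]
    exact b.dense_span.ge

@[simp]
theorem coe_reindex {ι ι' : Type*} (b : HilbertBasis ι 𝕜 E) (e : ι ≃ ι') :
    ⇑(b.reindex e) = b ∘ e.symm :=
  HilbertBasis.coe_mk _ _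

theorem exists_nat_subset_image_Iio [SeparableSpace E] (hE : ¬ FiniteDimensional 𝕜 E)
    {s : Set E} (hs : Orthonormal 𝕜 ((↑) : s → E)) (hfin : s.Finite) {n : ℕ}
    (hn : s.ncard ≤ n) : ∃ b : HilbertBasis ℕ 𝕜 E, s ⊆ b '' Iio n := by
  obtain ⟨w, b, hsw, hb⟩ := hs.exists_hilbertBasis_extension
  have : Countable w := b.orthonormal.countable
  have : Infinite w := b.infinite_of_not_finiteDimensional hE
  have hfin' : ((↑) ⁻¹' s : Set w).Finite := hfin.preimage Subtype.val_injective.injOn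
  have hn' : ((↑) ⁻¹' s : Set w).ncard ≤ n := by
    rwa [ncard_preimage_of_injective_subset_range Subtype.val_injective
      (by rwa [Subtype.range_coe])]
  obtain ⟨e, he⟩ := hfin'.exists_equiv_nat_subset_image_Iio hn'
  refine ⟨b.reindex e.symm, fun x hx => ?_⟩
  obtain ⟨k, hk, hkx⟩ := he (show ⟨x, hsw hx⟩ ∈ _ from hx)
  exact ⟨k, hk, by simp [hb, hkx]⟩

theorem exists_linearIsometryEquiv_le_map_span (τ : HilbertBasis ℕ 𝕜 E)
    (W : Submodule 𝕜 E) [FiniteDimensional 𝕜 W] {n : ℕ} (hW : finrank 𝕜 W ≤ n) :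
    ∃ U : E ≃ₗᵢ[𝕜] E, W ≤ (Submodule.span 𝕜 (τ '' Iio n)).map (U : E →ₗ[𝕜] E) := by
  have : SeparableSpace E := τ.separableSpace
  let u := stdOrthonormalBasis 𝕜 W
  have hu : Orthonormal 𝕜 (W.subtype ∘ u) := u.orthonormal.comp_linearIsometry W.subtypeₗᵢ
  have hWu : W = Submodule.span 𝕜 (range (W.subtype ∘ u)) := by
    rw [range_comp, ← Submodule.map_span, ← u.coe_toBasis, u.toBasis.span_eq, Submodule.map_top,
      Submodule.range_subtype]
  obtain ⟨b, hb⟩ := exists_nat_subset_image_Iio τ.not_finiteDimensional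
    hu.toSubtypeRange (finite_range _) <|
    (ncard_range_of_injective hu.linearIndependent.injective).trans_le (by simpa using hW)
  refine ⟨τ.repr.trans b.repr.symm, ?_⟩
  rw [Submodule.map_span, image_image, hWu]
  refine Submodule.span_mono (hb.trans_eq (image_congr fun k _ => ?_))
  change b k = b.repr.symm (τ.repr (τ k))
  rw [τ.repr_self, b.repr_symm_single]

end HilbertBasis

end HilbertSpace

/-- let `H` be a separable infinite-dimensional Hilbert space (with
orthonormal basis `τ : ℕ → H`), `K` an `n`-dimensional Hilbert space, and `A` the set
of unit vectors of `H⊗K` of the form `Σ_{k<n} τₖ ⊗ ψₖ`.  Then every unit vector of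
`H⊗K` can be written as `(U⊗I_K)φ` with `U` unitary on `H` and `φ ∈ A`; moreover `A`
is compact.  Here `H⊗K` is identified with `H^n = PiLp 2 (fun _ : Fin n => H)` via an
orthonormal basis of `K`, under which `A` is the set of unit vectors all of whose
components lie in `span{τ₀,…,τ_{n−1}}`, and `U⊗I_K` acts componentwise. -/
theorem unit_vectors_from_compact_slice
    {H : Type*} [NormedAddCommGroup H] [InnerProductSpace ℂ H] [CompleteSpace H]
    (τ : HilbertBasis ℕ ℂ H) (n : ℕ)
    (A : Set (PiLp 2 (fun _ : Fin n => H)))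
    (hA : A = {x : PiLp 2 (fun _ : Fin n => H) | ‖x‖ = 1 ∧
      ∀ i, x i ∈ Submodule.span ℂ ((fun k => τ k) '' Set.Iio n)}) :
    (∀ x : PiLp 2 (fun _ : Fin n => H), ‖x‖ = 1 →
        ∃ (U : H ≃ₗᵢ[ℂ] H) (φ : PiLp 2 (fun _ : Fin n => H)),
          φ ∈ A ∧ ∀ i, x i = U (φ i)) ∧
      IsCompact A := by
  subst hA
  have : FiniteDimensional ℂ (Submodule.span ℂ (τ '' Iio n)) :=
    FiniteDimensional.span_of_finite ℂ ((finite_Iio n).image _)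
  refine ⟨fun x hx => ?_, PiLp.isCompact_setOf_norm_eq_and_forall_mem _ 1⟩
  have : FiniteDimensional ℂ (Submodule.span ℂ (range fun i => x i)) :=
    FiniteDimensional.span_of_finite ℂ (finite_range _)
  obtain ⟨U, hU⟩ := τ.exists_linearIsometryEquiv_le_map_span (Submodule.span ℂ (range fun i => x i))
    ((finrank_range_le_card _).trans_eq (Fintype.card_fin n))
  refine ⟨U, LinearIsometryEquiv.piLpCongrRight 2 (fun _ => U.symm) x, ⟨?_, fun i => ?_⟩,
    fun i => ?_⟩
  · rw [LinearIsometryEquiv.norm_map, hx]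
  · obtain ⟨y, hy, hyx⟩ := hU (Submodule.subset_span (mem_range_self i))
    simpa [← hyx] using hy
  · simp

end
end

section
/- Let G = Σₖ Eₖ |τₖ⟩⟨τₖ| be a positive operator with discrete spectrum with eigenvalues Eₖ ↗ +∞, let {cₖ} ⊂ (0,1) be a sequence tending to 0, and set B = Σₖ √(cₖEₖ) |τₖ⟩⟨τₖ|. Then ‖B‖_E^{G,∘} = o(√E) as E → ∞, where (‖B‖_E^{G,∘})² = sup{Σₖ cₖEₖ xₖ² : Σₖ Eₖ xₖ² ≤ E, Σₖ xₖ² = 1, only finitely many xₖ nonzero}. -/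
open Filter

/-- for `B = Σₖ √(cₖEₖ)|τₖ⟩⟨τₖ|` with `Eₖ ↗ ∞` and `cₖ ∈ (0,1)`, `cₖ → 0`,
one has `‖B‖_E^{G,∘} = o(√E)` as `E → ∞`, where
`(‖B‖_E^{G,∘})² = sup{Σₖ cₖEₖxₖ² : Σₖ Eₖxₖ² ≤ E, Σₖ xₖ² = 1, finitely many xₖ ≠ 0}`. -/
theorem B_is_sqrtG_infinitesimal
    (Ek : ℕ → ℝ) (hEnn : ∀ k, 0 ≤ Ek k) (hmono : Monotone Ek)
    (htop : Tendsto Ek atTop atTop)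
    (c : ℕ → ℝ) (hc : ∀ k, c k ∈ Set.Ioo (0:ℝ) 1)
    (hc0 : Tendsto c atTop (nhds 0)) :
    ∀ C > 0, ∃ E₀ : ℝ, ∀ E ≥ E₀,
      Real.sqrt (sSup {y : ℝ | ∃ x : ℕ → ℝ, (Function.support x).Finite ∧
          (∑' k, Ek k * (x k) ^ 2) ≤ E ∧ (∑' k, (x k) ^ 2) = 1 ∧
          y = ∑' k, c k * Ek k * (x k) ^ 2}) < C * Real.sqrt E := by
  intro C hC
  have hεpos : (0:ℝ) < C ^ 2 / 4 := by positivity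
  obtain ⟨N, hN⟩ := (Metric.tendsto_atTop.mp hc0 (C ^ 2 / 4) hεpos)
  refine ⟨max 1 (4 * Ek N / C ^ 2), fun E hE => ?_⟩
  have hE1 : (1:ℝ) ≤ E := le_trans (le_max_left _ _) hE
  have hE0 : (0:ℝ) < E := lt_of_lt_of_le one_pos hE1
  have hEN : Ek N ≤ C ^ 2 / 4 * E := by
    have h2 : 4 * Ek N / C ^ 2 ≤ E := le_trans (le_max_right _ _) hE
    rw [div_le_iff₀ (by positivity)] at h2
    nlinarith
  have hsup : sSup {y : ℝ | ∃ x : ℕ → ℝ, (Function.support x).Finite ∧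
          (∑' k, Ek k * (x k) ^ 2) ≤ E ∧ (∑' k, (x k) ^ 2) = 1 ∧
          y = ∑' k, c k * Ek k * (x k) ^ 2} ≤ C ^ 2 / 2 * E := by
    apply Real.sSup_le
    · rintro y ⟨x, hfin, hxE, hx1, rfl⟩
      have hsq : Summable (fun k => (x k) ^ 2) := by
        apply summable_of_finite_support
        exact hfin.subset (by intro k hk; simp only [Function.mem_support] at *; intro h
                              exact hk (by rw [h]; ring))
      have hsE : Summable (fun k => Ek k * (x k) ^ 2) := by
        apply summable_of_finite_support
        exact hfin.subset (by intro k hk; simp only [Function.mem_support] at *; intro h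
                              exact hk (by rw [h]; ring))
      have hsc : Summable (fun k => c k * Ek k * (x k) ^ 2) := by
        apply summable_of_finite_support
        exact hfin.subset (by intro k hk; simp only [Function.mem_support] at *; intro h
                              exact hk (by rw [h]; ring))
      have hsg : Summable (fun k => (if k < N then Ek N * (x k) ^ 2 else 0)) := by
        apply summable_of_finite_support
        apply Set.Finite.subset (Set.finite_Iio N)
        intro k hk
        simp only [Function.mem_support] at hk
        by_contra h
        simp only [Set.mem_Iio, not_lt] at h
        exact hk (if_neg (not_lt.mpr h))
      -- pointwise bound
      have hpt : ∀ k, c k * Ek k * (x k) ^ 2 ≤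
          (if k < N then Ek N * (x k) ^ 2 else 0) + C ^ 2 / 4 * (Ek k * (x k) ^ 2) := by
        intro k
        have hck := hc k
        have hx2 : (0:ℝ) ≤ (x k) ^ 2 := sq_nonneg _
        by_cases hk : k < N
        · rw [if_pos hk]
          have h1 : c k * Ek k * (x k) ^ 2 ≤ Ek k * (x k) ^ 2 := by
            nlinarith [mul_nonneg (hEnn k) hx2, hck.1, hck.2]
          have h2 : Ek k * (x k) ^ 2 ≤ Ek N * (x k) ^ 2 := by
            have := hmono (le_of_lt hk)
            nlinarith
          nlinarith [mul_nonneg (mul_nonneg hεpos.le (hEnn k)) hx2]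
        · rw [if_neg hk]
          have hck2 : c k < C ^ 2 / 4 := by
            have := hN k (not_lt.mp hk)
            rw [Real.dist_eq, sub_zero] at this
            calc c k ≤ |c k| := le_abs_self _
            _ < C ^ 2 / 4 := this
          nlinarith [mul_nonneg (hEnn k) hx2, hck.1]
      have hsum1 : (∑' k, c k * Ek k * (x k) ^ 2) ≤
          ∑' k, ((if k < N then Ek N * (x k) ^ 2 else 0) + C ^ 2 / 4 * (Ek k * (x k) ^ 2)) :=
        Summable.tsum_le_tsum hpt hsc (hsg.add (hsE.mul_left _))
      rw [Summable.tsum_add hsg (hsE.mul_left _), tsum_mul_left] at hsum1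
      have hsum2 : (∑' k, (if k < N then Ek N * (x k) ^ 2 else 0)) ≤ Ek N := by
        calc (∑' k, (if k < N then Ek N * (x k) ^ 2 else 0))
            ≤ ∑' k, Ek N * (x k) ^ 2 := by
              apply Summable.tsum_le_tsum _ hsg (hsq.mul_left _)
              intro k
              by_cases hk : k < N
              · rw [if_pos hk]
              · rw [if_neg hk]
                exact mul_nonneg (hEnn N) (sq_nonneg _)
          _ = Ek N := by rw [tsum_mul_left, hx1, mul_one]
      have h3 : C ^ 2 / 4 * (∑' k, Ek k * (x k) ^ 2) ≤ C ^ 2 / 4 * E :=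
        mul_le_mul_of_nonneg_left hxE hεpos.le
      nlinarith
    · nlinarith
  calc Real.sqrt (sSup _) ≤ Real.sqrt (C ^ 2 / 2 * E) := Real.sqrt_le_sqrt hsup
    _ < Real.sqrt (C ^ 2 * E) := by
        apply Real.sqrt_lt_sqrt (by positivity)
        nlinarith
    _ = C * Real.sqrt E := by
        rw [Real.sqrt_mul (by positivity), Real.sqrt_sq hC.le]
end

section
/- For a quantum operation Φ that is G-limited with amplification factor k_Φ = lim_{E→∞} Y_Φ(E)/E, the extension of Φ to √G-bounded operators satisfies b_{√G}(Φ(A)) ≤ √(k_Φ ‖Φ(I)‖) · b_{√G}(A), where b_{√G}(A) = lim_{E→∞} ‖A‖_E^G/√E is the √G-bound. Consequently Φ maps √G-infinitesimal operators to √G-infinitesimal operators. -/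
/-!
Write `f E = (‖A‖_E^G)^2`. Concavity and monotonicity of `f` give, for every `b > 1`, the affine
majorant `f y ≤ C_b + s_b y`, where `s_b` is the slope of the chord of `f` over `[1, b]`. Hence
`(‖Φ(A)‖_E^G)^2 / E ≤ ‖Φ(I)‖ (C_b + s_b Y_Φ(E)) / E → ‖Φ(I)‖ s_b k_Φ`, and `s_b → b_{√G}(A)^2`
as `b → ∞` because `f(b)/b → b_{√G}(A)^2`.
-/

open Filter Set Topology

theorem nonneg_of_tendsto_of_nonnegOn_Ioi {f : ℝ → ℝ} {a : ℝ}
    (hf : ∀ x ∈ Ioi (0 : ℝ), 0 ≤ f x) (h : Tendsto f atTop (𝓝 a)) : 0 ≤ a :=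
  ge_of_tendsto h (eventually_gt_atTop 0 |>.mono hf)

theorem tendsto_sq_div_of_tendsto_div_sqrt {f : ℝ → ℝ} {b : ℝ}
    (h : Tendsto (fun x => f x / √x) atTop (𝓝 b)) :
    Tendsto (fun x => f x ^ 2 / x) atTop (𝓝 (b ^ 2)) := by
  refine (h.pow 2).congr' ?_
  filter_upwards [eventually_ge_atTop 0] with x hx
  rw [div_pow, Real.sq_sqrt hx]

theorem tendsto_slope_atTop_of_tendsto_div {f : ℝ → ℝ} {L : ℝ} (a : ℝ)
    (h : Tendsto (fun x => f x / x) atTop (𝓝 L)) : Tendsto (slope f a) atTop (𝓝 L) := by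
  have hsub : Tendsto (fun x => x - a) atTop atTop := tendsto_atTop_add_const_right _ _ tendsto_id
  have hlim : Tendsto (fun x => f x / x * (1 + a / (x - a)) - f a / (x - a)) atTop
      (𝓝 (L * (1 + 0) - 0)) :=
    (h.mul (tendsto_const_nhds.add (tendsto_const_nhds.div_atTop hsub))).sub
      (tendsto_const_nhds.div_atTop hsub)
  rw [add_zero, mul_one, sub_zero] at hlim
  refine hlim.congr' ?_
  filter_upwards [eventually_gt_atTop a, eventually_gt_atTop 0] with x hxa hx0
  have : x - a ≠ 0 := sub_ne_zero.mpr hxa.ne'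
  rw [slope_def_field]
  field_simp
  ring

theorem ConcaveOn.le_add_slope_mul {f : ℝ → ℝ} (hf : ConcaveOn ℝ (Ioi 0) f)
    (hmono : MonotoneOn f (Ioi 0)) {a b y : ℝ} (ha : 0 < a) (hab : a < b) (hy : 0 < y) :
    f y ≤ f b + slope f a b * y := by
  have hb : (0 : ℝ) < b := ha.trans hab
  have hslope : 0 ≤ slope f a b := hmono.slope_nonneg ha hb
  rcases le_or_gt y b with hyb | hby
  · nlinarith [hmono hy hb hyb]
  · have hchord := hf.slope_anti_adjacent (mem_Ioi.mpr ha) (mem_Ioi.mpr hy) hab hby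
    rw [div_le_iff₀ (sub_pos.mpr hby)] at hchord
    rw [slope_def_field] at hslope ⊢
    nlinarith [mul_nonneg hslope hb.le]

-- `g 0` is not controlled by the hypotheses; adding `g 0 ^ 2` makes the bound hold at `y = 0` too.
theorem sq_le_sq_add_sq_add_slope_mul {g : ℝ → ℝ} (hmono : MonotoneOn g (Ioi 0))
    (hnn : ∀ x ∈ Ioi (0 : ℝ), 0 ≤ g x) (hconc : ConcaveOn ℝ (Ioi 0) (fun x => g x ^ 2))
    {a b y : ℝ} (ha : 0 < a) (hab : a < b) (hy : 0 ≤ y) :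
    g y ^ 2 ≤ g 0 ^ 2 + g b ^ 2 + slope (fun x => g x ^ 2) a b * y := by
  have hsqmono : MonotoneOn (fun x => g x ^ 2) (Ioi 0) := fun x hx z hz hxz =>
    pow_le_pow_left₀ (hnn x hx) (hmono hx hz hxz) 2
  rcases hy.eq_or_lt with rfl | hy
  · nlinarith [sq_nonneg (g b)]
  · nlinarith [hconc.le_add_slope_mul hsqmono ha hab hy, sq_nonneg (g 0)]

theorem le_mul_of_le_add_mul_of_tendsto_div {u v : ℝ → ℝ} {β k C m : ℝ}
    (hu : Tendsto (fun x => u x / x) atTop (𝓝 β))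
    (hv : Tendsto (fun x => v x / x) atTop (𝓝 k))
    (h : ∀ᶠ x in atTop, u x ≤ C + m * v x) : β ≤ m * k := by
  have hlim : Tendsto (fun x => C / x + m * (v x / x)) atTop (𝓝 (0 + m * k)) :=
    (tendsto_const_nhds.div_atTop tendsto_id).add (hv.const_mul m)
  rw [zero_add] at hlim
  refine le_of_tendsto_of_tendsto hu hlim ?_
  filter_upwards [h, eventually_gt_atTop 0] with x hx hx0
  calc u x / x ≤ (C + m * v x) / x := div_le_div_of_nonneg_right hx hx0.le
    _ = C / x + m * (v x / x) := by ring

theorem sqrtG_bound_of_image_general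
    (YΦ : ℝ → ℝ)
    (hYnn : ∀ E ∈ Set.Ioi (0:ℝ), 0 ≤ YΦ E)
    (kΦ : ℝ) (hk : Tendsto (fun E => YΦ E / E) atTop (nhds kΦ))
    (c : ℝ) (hc : 0 ≤ c)  -- `c = ‖Φ(I)‖`
    (nA nΦA : ℝ → ℝ)  -- `nA E = ‖A‖_E^G`, `nΦA E = ‖Φ(A)‖_E^G`
    (hnAmono : MonotoneOn nA (Set.Ioi 0))
    (hnAnn : ∀ E ∈ Set.Ioi (0:ℝ), 0 ≤ nA E) (hnΦAnn : ∀ E ∈ Set.Ioi (0:ℝ), 0 ≤ nΦA E)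
    (hnAconc : ConcaveOn ℝ (Set.Ioi 0) (fun E => (nA E) ^ 2))
    (hbound : ∀ E > 0, nΦA E ≤ Real.sqrt c * nA (YΦ E))
    (bA bΦA : ℝ)  -- the √G-bounds `b_{√G}(A)` and `b_{√G}(Φ(A))`
    (hbA : Tendsto (fun E => nA E / Real.sqrt E) atTop (nhds bA))
    (hbΦA : Tendsto (fun E => nΦA E / Real.sqrt E) atTop (nhds bΦA)) :
    bΦA ≤ Real.sqrt (kΦ * c) * bA ∧ (bA = 0 → bΦA = 0) := by
  have hbA0 := nonneg_of_tendsto_of_nonnegOn_Ioi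
    (fun E hE => div_nonneg (hnAnn E hE) (Real.sqrt_nonneg E)) hbA
  have hbΦA0 := nonneg_of_tendsto_of_nonnegOn_Ioi
    (fun E hE => div_nonneg (hnΦAnn E hE) (Real.sqrt_nonneg E)) hbΦA
  have hk0 := nonneg_of_tendsto_of_nonnegOn_Ioi (fun E hE => div_nonneg (hYnn E hE) hE.le) hk
  have hchord : ∀ b > 1, bΦA ^ 2 ≤ c * slope (fun E => nA E ^ 2) 1 b * kΦ := by
    intro b hb
    refine le_mul_of_le_add_mul_of_tendsto_div (C := c * (nA 0 ^ 2 + nA b ^ 2))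
      (tendsto_sq_div_of_tendsto_div_sqrt hbΦA) hk ?_
    filter_upwards [eventually_gt_atTop 0] with E hE
    calc nΦA E ^ 2 ≤ (√c * nA (YΦ E)) ^ 2 := pow_le_pow_left₀ (hnΦAnn E hE) (hbound E hE) 2
      _ = c * nA (YΦ E) ^ 2 := by rw [mul_pow, Real.sq_sqrt hc]
      _ ≤ c * (nA 0 ^ 2 + nA b ^ 2 + slope (fun E => nA E ^ 2) 1 b * YΦ E) :=
        mul_le_mul_of_nonneg_left
          (sq_le_sq_add_sq_add_slope_mul hnAmono hnAnn hnAconc one_pos hb (hYnn E hE)) hc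
      _ = _ := by ring
  have hsq : bΦA ^ 2 ≤ c * bA ^ 2 * kΦ :=
    ge_of_tendsto (((tendsto_slope_atTop_of_tendsto_div 1
      (tendsto_sq_div_of_tendsto_div_sqrt hbA)).const_mul c).mul_const kΦ)
      (eventually_gt_atTop 1 |>.mono hchord)
  have hmain : bΦA ≤ Real.sqrt (kΦ * c) * bA := by
    rw [← pow_le_pow_iff_left₀ hbΦA0 (by positivity) two_ne_zero, mul_pow,
      Real.sq_sqrt (mul_nonneg hk0 hc)]
    linarith
  exact ⟨hmain, fun h => le_antisymm (by simpa [h] using hmain) hbΦA0⟩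

/-- for a `G`-limited quantum operation `Φ` with amplification factor
`k_Φ = lim_{E→∞} Y_Φ(E)/E`, the extension of `Φ` satisfies
`b_{√G}(Φ(A)) ≤ √(k_Φ‖Φ(I)‖)·b_{√G}(A)`; consequently `Φ` maps `√G`-infinitesimal
operators to `√G`-infinitesimal operators.  Following the context, the norm bound
`‖Φ(A)‖_E^G ≤ √‖Φ(I)‖·‖A‖_{Y_Φ(E)}^G` is assumed, the functions `E ↦ ‖A‖_E^G` and
`E ↦ ‖Φ(A)‖_E^G` are abstracted as nondecreasing functions with concave squares, and
the `√G`-bounds are the limits of `‖·‖_E^G/√E`. -/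
theorem sqrtG_bound_of_image
    (YΦ : ℝ → ℝ) (hYconc : ConcaveOn ℝ (Set.Ioi 0) YΦ)
    (hYnn : ∀ E ∈ Set.Ioi (0:ℝ), 0 ≤ YΦ E)
    (kΦ : ℝ) (hk : Tendsto (fun E => YΦ E / E) atTop (nhds kΦ))
    (c : ℝ) (hc : 0 ≤ c)  -- `c = ‖Φ(I)‖`
    (nA nΦA : ℝ → ℝ)  -- `nA E = ‖A‖_E^G`, `nΦA E = ‖Φ(A)‖_E^G`
    (hnAmono : MonotoneOn nA (Set.Ioi 0)) (hnΦAmono : MonotoneOn nΦA (Set.Ioi 0))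
    (hnAnn : ∀ E ∈ Set.Ioi (0:ℝ), 0 ≤ nA E) (hnΦAnn : ∀ E ∈ Set.Ioi (0:ℝ), 0 ≤ nΦA E)
    (hnAconc : ConcaveOn ℝ (Set.Ioi 0) (fun E => (nA E) ^ 2))
    (hnΦAconc : ConcaveOn ℝ (Set.Ioi 0) (fun E => (nΦA E) ^ 2))
    (hbound : ∀ E > 0, nΦA E ≤ Real.sqrt c * nA (YΦ E))
    (bA bΦA : ℝ)  -- the √G-bounds `b_{√G}(A)` and `b_{√G}(Φ(A))`
    (hbA : Tendsto (fun E => nA E / Real.sqrt E) atTop (nhds bA))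
    (hbΦA : Tendsto (fun E => nΦA E / Real.sqrt E) atTop (nhds bΦA)) :
    bΦA ≤ Real.sqrt (kΦ * c) * bA ∧ (bA = 0 → bΦA = 0) :=
  sqrtG_bound_of_image_general YΦ hYnn kΦ hk c hc nA nΦA hnAmono hnAnn hnΦAnn hnAconc hbound bA bΦA
    hbA hbΦA
end

section
/- Define two norms on a vector space related by |||A|||_E = sup_{t>0} ‖A‖_{tE}/√(1+t) and ‖A‖_E = inf_{t>0} |||A|||_{tE}·√(1+1/t) for a family of norms (‖·‖_E)_{E>0} with E ↦ (‖A‖_E)² concave and nondecreasing. Then √(1/2)·‖A‖_E ≤ |||A|||_E ≤ ‖A‖_E for all E > 0. -/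
/-!
For `t ≤ 1` monotonicity gives `g (t * E) ≤ g E`. For `t ≥ 1`, a nonnegative concave function
`f` on `(0, ∞)` has `f x / x` nonincreasing (compare the slope over `[y, z]` with the slopes
over `[x, y]` as `x → 0⁺`, where `f x ≥ 0` replaces the missing value `f 0 ≥ 0`), so
`g (t * E) ^ 2 ≤ t * g E ^ 2`. Either way `g (t * E) ≤ √(1 + t) * g E`, and the choice `t = 1`
gives the lower bound.
-/

open Set Filter Topology

lemma ConcaveOn.antitoneOn_div_self {f : ℝ → ℝ} (hf : ConcaveOn ℝ (Ioi 0) f)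
    (hf₀ : ∀ x ∈ Ioi (0 : ℝ), 0 ≤ f x) : AntitoneOn (fun x => f x / x) (Ioi 0) := by
  intro y hy z hz hyz
  rcases hyz.eq_or_lt with rfl | hyz
  · rfl
  have hy : 0 < y := hy
  have hsecant : ∀ x ∈ Ioo 0 y, (f z - f y) / (z - y) ≤ f y / (y - x) := fun x hx =>
    calc (f z - f y) / (z - y) ≤ (f y - f x) / (y - x) := hf.slope_anti_adjacent hx.1 hz hx.2 hyz
      _ ≤ f y / (y - x) := by gcongr <;> linarith [hx.2, hf₀ x hx.1]
  have hlim : Tendsto (fun x => f y / (y - x)) (𝓝[>] 0) (𝓝 (f y / y)) := by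
    have : ContinuousAt (fun x => f y / (y - x)) 0 := by fun_prop (disch := simp [hy.ne'])
    simpa using this.tendsto.mono_left nhdsWithin_le_nhds
  have hslope : (f z - f y) / (z - y) ≤ f y / y :=
    ge_of_tendsto hlim (eventually_of_mem (Ioo_mem_nhdsGT hy) hsecant)
  rw [div_le_iff₀ (sub_pos.2 hyz)] at hslope
  rw [div_le_div_iff₀ (hy.trans hyz) hy]
  nlinarith [div_mul_cancel₀ (f y) hy.ne']

lemma sq_apply_mul_le_one_add_mul {g : ℝ → ℝ} (hg₀ : ∀ x ∈ Ioi (0 : ℝ), 0 ≤ g x)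
    (hmono : MonotoneOn g (Ioi 0)) (hconc : ConcaveOn ℝ (Ioi 0) (fun x => g x ^ 2))
    {E t : ℝ} (hE : 0 < E) (ht : 0 < t) : g (t * E) ^ 2 ≤ (1 + t) * g E ^ 2 := by
  rcases le_total t 1 with ht1 | ht1
  · have hle : g (t * E) ≤ g E :=
      hmono (mul_pos ht hE) hE (mul_le_of_le_one_left hE.le ht1)
    have := pow_le_pow_left₀ (hg₀ _ (mul_pos ht hE)) hle 2
    nlinarith [sq_nonneg (g E)]
  · have := hconc.antitoneOn_div_self (fun x _ => sq_nonneg (g x)) hE (mul_pos ht hE)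
      (le_mul_of_one_le_left hE.le ht1)
    simp only at this
    rw [div_le_div_iff₀ (mul_pos ht hE) hE] at this
    nlinarith [sq_nonneg (g E)]

lemma apply_mul_div_sqrt_one_add_le {g : ℝ → ℝ} (hg₀ : ∀ x ∈ Ioi (0 : ℝ), 0 ≤ g x)
    (hmono : MonotoneOn g (Ioi 0)) (hconc : ConcaveOn ℝ (Ioi 0) (fun x => g x ^ 2))
    {E t : ℝ} (hE : 0 < E) (ht : 0 < t) : g (t * E) / √(1 + t) ≤ g E := by
  rw [div_le_iff₀ (by positivity), ← abs_of_nonneg (hg₀ E hE), ← Real.sqrt_sq_eq_abs,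
    ← Real.sqrt_mul (sq_nonneg _), mul_comm (g E ^ 2)]
  exact Real.le_sqrt_of_sq_le (sq_apply_mul_le_one_add_mul hg₀ hmono hconc hE ht)

/-- relation (6), abstract form: for `g : (0,∞) → [0,∞)` nondecreasing
with `g²` concave, the function `h(E) = sup_{t>0} g(tE)/√(1+t)` satisfies
`√(1/2)·g(E) ≤ h(E) ≤ g(E)` for all `E > 0`. -/
theorem equivalent_norms_relation
    (g : ℝ → ℝ) (hnonneg : ∀ E ∈ Set.Ioi (0:ℝ), 0 ≤ g E)
    (hmono : MonotoneOn g (Set.Ioi 0))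
    (hconc : ConcaveOn ℝ (Set.Ioi 0) (fun E => (g E) ^ 2)) :
    ∀ E > 0,
      Real.sqrt (1/2) * g E ≤ sSup {y : ℝ | ∃ t > 0, y = g (t * E) / Real.sqrt (1 + t)} ∧
      sSup {y : ℝ | ∃ t > 0, y = g (t * E) / Real.sqrt (1 + t)} ≤ g E := by
  intro E hE
  have hub : ∀ y ∈ {y : ℝ | ∃ t > 0, y = g (t * E) / Real.sqrt (1 + t)}, y ≤ g E := by
    rintro y ⟨t, ht, rfl⟩
    exact apply_mul_div_sqrt_one_add_le hnonneg hmono hconc hE ht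
  have hat_one : Real.sqrt (1/2) * g E = g (1 * E) / Real.sqrt (1 + 1) := by
    rw [one_mul, one_add_one_eq_two, one_div, Real.sqrt_inv, inv_mul_eq_div]
  exact ⟨hat_one ▸ le_csSup ⟨g E, hub⟩ ⟨1, one_pos, rfl⟩, Real.sSup_le hub (hnonneg E hE)⟩
end

section
/- Let G be a positive densely defined operator with inf{‖Gφ‖ : φ ∈ D(G), ‖φ‖=1} = 0 and let Pₙ be the spectral projections of G onto [0, Eₙ) for a discrete operator G with eigenvalues Eₖ ↗ ∞. Then for any state ρ with Tr Gρ ≤ E and Eₙ ≥ E, the normalized compression ρₙ = PₙρPₙ/Tr(Pₙρ) is a state with Tr Gρₙ ≤ E, and ρₙ → ρ in trace norm as n → ∞. -/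
open Filter

noncomputable section

/-!
Write `ρ = S* S`, put `P = Pₙ`, `Q = 1 - Pₙ` and `tₙ = Tr(Pₙρ)`. For every `x`,
`⟪x, (ρ - c PρP) B x⟫ = ⟪S Q x, S B x⟫ + ⟪S P x, S Q B x⟫ + (1 - c) ⟪S P x, S P B x⟫`,
and Cauchy–Schwarz in the Hilbert–Schmidt norm bounds the trace of each term, because
`‖S P‖²_HS = tₙ`, `‖S Q‖²_HS = 1 - tₙ` and `‖X B‖_HS ≤ ‖X‖_HS ‖B‖` (the Hilbert–Schmidt norm
is invariant under taking adjoints). With `c = tₙ⁻¹` the bound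
`√(1 - tₙ) + √tₙ √(1 - tₙ) + |1 - tₙ⁻¹| tₙ` tends to `0` as `tₙ → 1`.

For the energy bound: since `Eₖ ≥ E` for `k ≥ n`, the part of `Tr Gρ ≤ E` outside `Pₙ` is at
least `E (1 - tₙ)`, so `Tr(G PₙρPₙ) ≤ E tₙ`.
-/

open Finset ContinuousLinearMap InnerProductSpace
open scoped ENNReal InnerProductSpace ComplexOrder Topology

theorem summable_of_tsum_ne_zero {ι α : Type*} [AddCommMonoid α] [TopologicalSpace α]
    {f : ι → α} (h : ∑' i, f i ≠ 0) : Summable f :=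
  by_contra fun hf => h (tsum_eq_zero_of_not_summable hf)

section CauchySchwarz

variable {ι 𝕜 E : Type*} [RCLike 𝕜] [NormedAddCommGroup E] [InnerProductSpace 𝕜 E]

theorem memℓp_two_of_tsum_enorm_sq_ne_top {f : ι → E} (hf : ∑' i, ‖f i‖ₑ ^ 2 ≠ ∞) :
    Memℓp f 2 := by
  refine memℓp_gen ((ENNReal.summable_toReal hf).congr fun i => ?_)
  simp [← ofReal_norm, ENNReal.toReal_pow]

theorem lp.norm_le_sqrt_of_tsum_enorm_sq_le (F : lp (fun _ : ι => E) 2) {α : ℝ}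
    (hF : ∑' i, ‖F i‖ₑ ^ 2 ≤ ENNReal.ofReal α) : ‖F‖ ≤ √α := by
  have hnorm : ‖F‖ ^ 2 = (∑' i, ‖F i‖ₑ ^ 2).toReal := by
    have h := lp.norm_rpow_eq_tsum (p := 2) (by norm_num) F
    simp only [ENNReal.toReal_ofNat, Real.rpow_two] at h
    rw [h, ENNReal.tsum_toReal_eq fun i => by simp]
    simp [← ofReal_norm, ENNReal.toReal_pow]
  rw [← Real.sqrt_sq (norm_nonneg F), hnorm, Real.sqrt, Real.sqrt, ENNReal.toReal,
    Real.toNNReal_coe]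
  exact NNReal.coe_le_coe.mpr
    (NNReal.sqrt_le_sqrt.mpr (ENNReal.toNNReal_mono ENNReal.ofReal_ne_top hF))

theorem summable_inner_and_norm_tsum_inner_le {f g : ι → E} {α β : ℝ}
    (hf : ∑' i, ‖f i‖ₑ ^ 2 ≤ ENNReal.ofReal α) (hg : ∑' i, ‖g i‖ₑ ^ 2 ≤ ENNReal.ofReal β) :
    Summable (fun i => ⟪f i, g i⟫_𝕜) ∧ ‖∑' i, ⟪f i, g i⟫_𝕜‖ ≤ √α * √β := by
  let F : lp (fun _ : ι => E) 2 :=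
    ⟨f, memℓp_two_of_tsum_enorm_sq_ne_top (ne_top_of_le_ne_top ENNReal.ofReal_ne_top hf)⟩
  let G : lp (fun _ : ι => E) 2 :=
    ⟨g, memℓp_two_of_tsum_enorm_sq_ne_top (ne_top_of_le_ne_top ENNReal.ofReal_ne_top hg)⟩
  refine ⟨lp.summable_inner F G, ?_⟩
  rw [← lp.inner_eq_tsum F G]
  exact (norm_inner_le_norm F G).trans <| mul_le_mul (lp.norm_le_sqrt_of_tsum_enorm_sq_le F hf)
    (lp.norm_le_sqrt_of_tsum_enorm_sq_le G hg) (norm_nonneg _) (Real.sqrt_nonneg _)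

end CauchySchwarz

theorem ENNReal.sum_mul_le_mul_sum_of_tsum_mul_le {ι : Type*} {e a : ι → ℝ≥0∞} {E : ℝ≥0∞}
    (s : Finset ι) (h : ∑' i, e i * a i ≤ E * ∑' i, a i) (hfin : E * ∑' i, a i ≠ ∞)
    (hs : ∀ i ∉ s, E ≤ e i) :
    ∑ i ∈ s, e i * a i ≤ E * ∑ i ∈ s, a i := by
  have htail : E * ∑' i : ((s : Set ι)ᶜ : Set ι), a i
      ≤ ∑' i : ((s : Set ι)ᶜ : Set ι), e i * a i := by
    rw [← ENNReal.tsum_mul_left]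
    exact ENNReal.tsum_le_tsum fun i => mul_le_mul_left (hs i i.2) _
  have htail_ne_top : E * ∑' i : ((s : Set ι)ᶜ : Set ι), a i ≠ ∞ := ne_top_of_le_ne_top hfin
    (mul_le_mul_right (ENNReal.tsum_comp_le_tsum_of_injective Subtype.val_injective a) E)
  refine ENNReal.le_of_add_le_add_right htail_ne_top ?_
  calc ∑ i ∈ s, e i * a i + E * ∑' i : ((s : Set ι)ᶜ : Set ι), a i
      ≤ ∑ i ∈ s, e i * a i + ∑' i : ((s : Set ι)ᶜ : Set ι), e i * a i := by gcongr
    _ = ∑' i, e i * a i := ENNReal.sum_add_tsum_compl s _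
    _ ≤ E * ∑' i, a i := h
    _ = E * ∑ i ∈ s, a i + E * ∑' i : ((s : Set ι)ᶜ : Set ι), a i := by
      rw [← ENNReal.sum_add_tsum_compl s a, mul_add]

section StarMulSelf

variable {𝕜 H : Type*} [RCLike 𝕜] [NormedAddCommGroup H] [InnerProductSpace 𝕜 H] [CompleteSpace H]

theorem re_inner_star_mul_self_apply (S : H →L[𝕜] H) (x : H) :
    RCLike.re ⟪x, (star S * S) x⟫_𝕜 = ‖S x‖ ^ 2 := by
  rw [star_eq_adjoint, mul_apply_eq_comp, adjoint_inner_right, inner_self_eq_norm_sq]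

theorem inner_sub_smul_compression_apply {S P : H →L[𝕜] H} (hP : IsSelfAdjoint P)
    (B : H →L[𝕜] H) (c : 𝕜) (x : H) :
    ⟪x, ((star S * S - c • (P ∘L (star S * S) ∘L P)) ∘L B) x⟫_𝕜 =
      ⟪S ((1 - P) x), S (B x)⟫_𝕜 + ⟪S (P x), S ((1 - P) (B x))⟫_𝕜
        + (1 - c) * ⟪S (P x), S (P (B x))⟫_𝕜 := by
  have hPsymm (y z : H) : ⟪y, P z⟫_𝕜 = ⟪P y, z⟫_𝕜 := (hP.isSymmetric y z).symm
  simp only [comp_apply, sub_apply, smul_apply, mul_apply_eq_comp, one_apply_eq_self,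
    star_eq_adjoint, inner_sub_left, inner_sub_right, inner_smul_right, adjoint_inner_right,
    hPsymm, map_sub]
  ring

end StarMulSelf

namespace HilbertBasis

variable {ι 𝕜 H : Type*} [RCLike 𝕜] [NormedAddCommGroup H] [InnerProductSpace 𝕜 H]
  (b : HilbertBasis ι 𝕜 H)

theorem tsum_enorm_inner_sq (x : H) : ∑' i, ‖⟪b i, x⟫_𝕜‖ₑ ^ 2 = ‖x‖ₑ ^ 2 := by
  have h := lp.hasSum_norm (p := 2) (by norm_num) (b.repr x)
  simp only [ENNReal.toReal_ofNat, Real.rpow_two, HilbertBasis.repr_apply_apply,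
    LinearIsometryEquiv.norm_map] at h
  simp_rw [← ofReal_norm, ← ENNReal.ofReal_pow (norm_nonneg _)]
  rw [← ENNReal.ofReal_tsum_of_nonneg (fun _ => by positivity) h.summable, h.tsum_eq]

def hsNormSq (X : H →L[𝕜] H) : ℝ≥0∞ := ∑' i, ‖X (b i)‖ₑ ^ 2

theorem hsNormSq_comp_le_left (A X : H →L[𝕜] H) :
    b.hsNormSq (A ∘L X) ≤ ‖A‖ₑ ^ 2 * b.hsNormSq X := by
  rw [hsNormSq, hsNormSq, ← ENNReal.tsum_mul_left]
  gcongr with i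
  rw [← mul_pow]
  gcongr
  exact A.le_opENorm _

def proj (s : Finset ι) : H →L[𝕜] H := ∑ k ∈ s, rankOne 𝕜 (b k) (b k)

theorem isPositive_proj (s : Finset ι) : (b.proj s).IsPositive :=
  isPositive_sum s fun k _ => isPositive_rankOne_self (b k)

theorem inner_proj_right (s : Finset ι) (x y : H) :
    ⟪x, b.proj s y⟫_𝕜 = ⟪b.proj s x, y⟫_𝕜 :=
  ((b.isPositive_proj s).isSymmetric x y).symm

theorem proj_apply_self [DecidableEq ι] (s : Finset ι) (k : ι) :
    b.proj s (b k) = if k ∈ s then b k else 0 := by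
  simp [proj, rankOne_apply, orthonormal_iff_ite.mp b.orthonormal]

theorem hsNormSq_comp_proj (X : H →L[𝕜] H) (s : Finset ι) :
    b.hsNormSq (X ∘L b.proj s) = ∑ k ∈ s, ‖X (b k)‖ₑ ^ 2 := by
  classical
  rw [hsNormSq, tsum_eq_sum (s := s) fun k hk => by simp [proj_apply_self, hk]]
  exact sum_congr rfl fun k hk => by simp [proj_apply_self, hk]

theorem hsNormSq_comp_proj_add_hsNormSq_comp_one_sub_proj (X : H →L[𝕜] H) (s : Finset ι) :
    b.hsNormSq (X ∘L b.proj s) + b.hsNormSq (X ∘L (1 - b.proj s)) = b.hsNormSq X := by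
  classical
  rw [hsNormSq, hsNormSq, ← ENNReal.tsum_add]
  refine tsum_congr fun k => ?_
  by_cases hk : k ∈ s <;> simp [proj_apply_self, hk]

theorem re_inner_inv_smul_compression_apply_self [DecidableEq ι] (X : H →L[𝕜] H)
    (s : Finset ι) (t : ℝ) (k : ι) :
    RCLike.re ⟪b k, ((t : 𝕜)⁻¹ • (b.proj s ∘L X ∘L b.proj s)) (b k)⟫_𝕜
      = if k ∈ s then t⁻¹ * RCLike.re ⟪b k, X (b k)⟫_𝕜 else 0 := by
  rw [smul_apply, inner_smul_right, comp_apply, inner_proj_right, comp_apply, proj_apply_self]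
  split_ifs
  · rw [← RCLike.ofReal_inv, RCLike.re_ofReal_mul]
  · simp

theorem tsum_re_inner_inv_smul_compression_apply_self (X : H →L[𝕜] H) (s : Finset ι) {t : ℝ}
    (ht : ∑ k ∈ s, RCLike.re ⟪b k, X (b k)⟫_𝕜 = t) (ht0 : t ≠ 0) :
    ∑' k, RCLike.re ⟪b k, ((t : 𝕜)⁻¹ • (b.proj s ∘L X ∘L b.proj s)) (b k)⟫_𝕜 = 1 := by
  classical
  rw [tsum_eq_sum (s := s) fun k hk => by rw [re_inner_inv_smul_compression_apply_self, if_neg hk],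
    sum_congr rfl fun k hk => by rw [re_inner_inv_smul_compression_apply_self, if_pos hk],
    ← mul_sum, ht, inv_mul_cancel₀ ht0]

theorem tsum_ofReal_mul_re_inner_inv_smul_compression_le {X : H →L[𝕜] H} (hX : X.IsPositive)
    {e : ι → ℝ} (he : ∀ k, 0 ≤ e k) {E : ℝ} (s : Finset ι) (hs : ∀ k ∉ s, E ≤ e k)
    (htr : ∑' k, RCLike.re ⟪b k, X (b k)⟫_𝕜 = 1)
    (hE : ∑' k, ENNReal.ofReal (e k * RCLike.re ⟪b k, X (b k)⟫_𝕜) ≤ ENNReal.ofReal E)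
    {t : ℝ} (ht : ∑ k ∈ s, RCLike.re ⟪b k, X (b k)⟫_𝕜 = t) (ht0 : 0 < t) :
    ∑' k, ENNReal.ofReal
      (e k * RCLike.re ⟪b k, ((t : 𝕜)⁻¹ • (b.proj s ∘L X ∘L b.proj s)) (b k)⟫_𝕜)
        ≤ ENNReal.ofReal E := by
  classical
  set d : ι → ℝ := fun k => RCLike.re ⟪b k, X (b k)⟫_𝕜
  have hd (k : ι) : 0 ≤ d k := hX.re_inner_nonneg_right (b k)
  have hsum : Summable d := summable_of_tsum_ne_zero (htr ▸ one_ne_zero)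
  have hd1 : ∑' k, ENNReal.ofReal (d k) = 1 := by
    rw [← ENNReal.ofReal_tsum_of_nonneg hd hsum, htr, ENNReal.ofReal_one]
  have hhead : ∑ k ∈ s, ENNReal.ofReal (e k) * ENNReal.ofReal (d k)
      ≤ ENNReal.ofReal E * ENNReal.ofReal t := by
    rw [← ht, ENNReal.ofReal_sum_of_nonneg fun k _ => hd k]
    refine ENNReal.sum_mul_le_mul_sum_of_tsum_mul_le s ?_ (by simp [hd1])
      fun k hk => ENNReal.ofReal_le_ofReal (hs k hk)
    simpa only [hd1, mul_one, ← ENNReal.ofReal_mul (he _)] using hE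
  rw [tsum_eq_sum (s := s) fun k hk => by
    rw [re_inner_inv_smul_compression_apply_self, if_neg hk, mul_zero, ENNReal.ofReal_zero]]
  calc ∑ k ∈ s, ENNReal.ofReal (e k * RCLike.re ⟪b k, _⟫_𝕜)
      = ENNReal.ofReal t⁻¹ * ∑ k ∈ s, ENNReal.ofReal (e k) * ENNReal.ofReal (d k) := by
        rw [mul_sum]
        refine sum_congr rfl fun k hk => ?_
        rw [re_inner_inv_smul_compression_apply_self, if_pos hk, mul_left_comm,
          ENNReal.ofReal_mul (by positivity), ENNReal.ofReal_mul (he k)]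
    _ ≤ ENNReal.ofReal t⁻¹ * (ENNReal.ofReal E * ENNReal.ofReal t) := by gcongr
    _ = ENNReal.ofReal E := by
      rw [mul_left_comm, ← ENNReal.ofReal_mul (by positivity), inv_mul_cancel₀ ht0.ne',
        ENNReal.ofReal_one, mul_one]

variable [CompleteSpace H]

theorem hsNormSq_adjoint (X : H →L[𝕜] H) : b.hsNormSq (adjoint X) = b.hsNormSq X :=
  calc ∑' i, ‖adjoint X (b i)‖ₑ ^ 2
      = ∑' i, ∑' j, ‖⟪b j, adjoint X (b i)⟫_𝕜‖ₑ ^ 2 := by simp only [tsum_enorm_inner_sq]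
    _ = ∑' j, ∑' i, ‖⟪b i, X (b j)⟫_𝕜‖ₑ ^ 2 := by
      rw [ENNReal.tsum_comm]
      simp only [adjoint_inner_right, ← ofReal_norm, norm_inner_symm]
    _ = ∑' j, ‖X (b j)‖ₑ ^ 2 := by simp only [tsum_enorm_inner_sq]

theorem hsNormSq_comp_le_right (X A : H →L[𝕜] H) :
    b.hsNormSq (X ∘L A) ≤ b.hsNormSq X * ‖A‖ₑ ^ 2 := by
  rw [← hsNormSq_adjoint, adjoint_comp, mul_comm, ← b.hsNormSq_adjoint X,
    ← LinearIsometryEquiv.enorm_map adjoint A]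
  exact b.hsNormSq_comp_le_left _ _

theorem hsNormSq_eq_tsum_ofReal_re_inner (S : H →L[𝕜] H) :
    b.hsNormSq S = ∑' k, ENNReal.ofReal (RCLike.re ⟪b k, (star S * S) (b k)⟫_𝕜) := by
  simp only [hsNormSq, re_inner_star_mul_self_apply, ENNReal.ofReal_pow (norm_nonneg _),
    ofReal_norm]

theorem norm_tsum_inner_sub_smul_compression_le {S P B : H →L[𝕜] H} (hP : IsSelfAdjoint P)
    (c : 𝕜) {α β : ℝ} (hα : 0 ≤ α) (hS : b.hsNormSq S ≤ 1) (hB : ‖B‖ ≤ 1)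
    (hSP : b.hsNormSq (S ∘L P) ≤ ENNReal.ofReal α)
    (hSQ : b.hsNormSq (S ∘L (1 - P)) ≤ ENNReal.ofReal β) :
    ‖∑' k, ⟪b k, ((star S * S - c • (P ∘L (star S * S) ∘L P)) ∘L B) (b k)⟫_𝕜‖
      ≤ √β + √α * √β + ‖1 - c‖ * α := by
  have hB' : ‖B‖ₑ ^ 2 ≤ 1 := by
    rw [← ofReal_norm, ← ENNReal.ofReal_pow (norm_nonneg B)]
    exact ENNReal.ofReal_le_one.mpr (pow_le_one₀ (norm_nonneg B) hB)
  have hSB : b.hsNormSq (S ∘L B) ≤ ENNReal.ofReal 1 := by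
    simpa using (b.hsNormSq_comp_le_right S B).trans (mul_le_one' hS hB')
  have hSPB : b.hsNormSq ((S ∘L P) ∘L B) ≤ ENNReal.ofReal α :=
    (b.hsNormSq_comp_le_right _ B).trans (by simpa using mul_le_mul' hSP hB')
  have hSQB : b.hsNormSq ((S ∘L (1 - P)) ∘L B) ≤ ENNReal.ofReal β :=
    (b.hsNormSq_comp_le_right _ B).trans (by simpa using mul_le_mul' hSQ hB')
  obtain ⟨h₁, b₁⟩ := summable_inner_and_norm_tsum_inner_le (𝕜 := 𝕜)
    (f := fun k => S ((1 - P) (b k))) (g := fun k => S (B (b k))) hSQ hSB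
  obtain ⟨h₂, b₂⟩ := summable_inner_and_norm_tsum_inner_le (𝕜 := 𝕜)
    (f := fun k => S (P (b k))) (g := fun k => S ((1 - P) (B (b k)))) hSP hSQB
  obtain ⟨h₃, b₃⟩ := summable_inner_and_norm_tsum_inner_le (𝕜 := 𝕜)
    (f := fun k => S (P (b k))) (g := fun k => S (P (B (b k)))) hSP hSPB
  simp only [inner_sub_smul_compression_apply hP]
  rw [(h₁.add h₂).tsum_add (h₃.mul_left _), h₁.tsum_add h₂, tsum_mul_left]
  calc _ ≤ ‖∑' k, ⟪S ((1 - P) (b k)), S (B (b k))⟫_𝕜‖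
        + ‖∑' k, ⟪S (P (b k)), S ((1 - P) (B (b k)))⟫_𝕜‖
        + ‖1 - c‖ * ‖∑' k, ⟪S (P (b k)), S (P (B (b k)))⟫_𝕜‖ := by
          grw [norm_add_le, norm_add_le, norm_mul]
    _ ≤ √β * √1 + √α * √β + ‖1 - c‖ * (√α * √α) := by gcongr
    _ = √β + √α * √β + ‖1 - c‖ * α := by rw [Real.sqrt_one, mul_one, Real.mul_self_sqrt hα]

theorem isPositive_inv_smul_compression {X : H →L[𝕜] H} (hX : X.IsPositive) (s : Finset ι)
    {t : ℝ} (ht : 0 ≤ t) : ((t : 𝕜)⁻¹ • (b.proj s ∘L X ∘L b.proj s)).IsPositive := by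
  have h := hX.conj_adjoint (b.proj s)
  rw [(b.isPositive_proj s).isSelfAdjoint.adjoint_eq] at h
  exact h.smul_of_nonneg (inv_nonneg.mpr (RCLike.ofReal_nonneg.mpr ht))

end HilbertBasis

section Convergence

variable {𝕜 H : Type*} [RCLike 𝕜] [NormedAddCommGroup H] [InnerProductSpace 𝕜 H]
  [CompleteSpace H]

theorem HilbertBasis.tendsto_sSup_norm_tsum_inner_sub_inv_smul_compression
    (τ : HilbertBasis ℕ 𝕜 H) (S : H →L[𝕜] H)
    (htr : ∑' k, RCLike.re ⟪τ k, (star S * S) (τ k)⟫_𝕜 = 1) {t : ℕ → ℝ}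
    (ht : ∀ n, ∑ k ∈ range n, RCLike.re ⟪τ k, (star S * S) (τ k)⟫_𝕜 = t n) :
    Tendsto (fun n => sSup {r : ℝ | ∃ B : H →L[𝕜] H, ‖B‖ ≤ 1 ∧
        r = ‖∑' k, ⟪τ k, ((star S * S - (t n : 𝕜)⁻¹ •
          (τ.proj (range n) ∘L (star S * S) ∘L τ.proj (range n))) ∘L B) (τ k)⟫_𝕜‖})
      atTop (𝓝 0) := by
  have hd (k : ℕ) : 0 ≤ RCLike.re ⟪τ k, (star S * S) (τ k)⟫_𝕜 := by
    rw [re_inner_star_mul_self_apply]; positivity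
  have hsum : HasSum (fun k => RCLike.re ⟪τ k, (star S * S) (τ k)⟫_𝕜) 1 :=
    htr ▸ (summable_of_tsum_ne_zero (htr ▸ one_ne_zero)).hasSum
  have ht0 (n : ℕ) : 0 ≤ t n := ht n ▸ sum_nonneg fun k _ => hd k
  have hS : τ.hsNormSq S = 1 := by
    rw [τ.hsNormSq_eq_tsum_ofReal_re_inner, ← ENNReal.ofReal_tsum_of_nonneg hd hsum.summable,
      hsum.tsum_eq, ENNReal.ofReal_one]
  have hSP (n : ℕ) : τ.hsNormSq (S ∘L τ.proj (range n)) = ENNReal.ofReal (t n) := by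
    rw [τ.hsNormSq_comp_proj, ← ht, ENNReal.ofReal_sum_of_nonneg fun k _ => hd k]
    simp only [re_inner_star_mul_self_apply, ENNReal.ofReal_pow (norm_nonneg _), ofReal_norm]
  have hSQ (n : ℕ) :
      τ.hsNormSq (S ∘L (1 - τ.proj (range n))) = ENNReal.ofReal (1 - t n) := by
    have h := τ.hsNormSq_comp_proj_add_hsNormSq_comp_one_sub_proj S (range n)
    rw [hSP, hS] at h
    rw [ENNReal.ofReal_sub _ (ht0 n), ENNReal.ofReal_one, ← h,
      ENNReal.add_sub_cancel_left ENNReal.ofReal_ne_top]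
  have htt : Tendsto t atTop (𝓝 1) := by simpa only [ht] using hsum.tendsto_sum_nat
  set g : ℝ → ℝ := fun x => √(1 - x) + √x * √(1 - x) + ‖1 - (x : 𝕜)⁻¹‖ * x
  have hlim : Tendsto (fun n => g (t n)) atTop (𝓝 0) := by
    have hg : ContinuousAt g 1 := by fun_prop (disch := norm_num)
    simpa [g, Function.comp_def] using hg.tendsto.comp htt
  refine squeeze_zero (fun n => Real.sSup_nonneg fun r ⟨B, _, hr⟩ => hr ▸ norm_nonneg _)
    (fun n => Real.sSup_le ?_ (add_nonneg (by positivity) (mul_nonneg (norm_nonneg _) (ht0 n))))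
    hlim
  rintro _ ⟨B, hB, rfl⟩
  exact τ.norm_tsum_inner_sub_smul_compression_le (τ.isPositive_proj _).isSelfAdjoint _
    (ht0 n) hS.le hB (hSP n).le (hSQ n).le

end Convergence

theorem compressed_states_approximation_general
    {H : Type*} [NormedAddCommGroup H] [InnerProductSpace ℂ H] [CompleteSpace H]
    (τ : HilbertBasis ℕ ℂ H) (Ek : ℕ → ℝ)
    (hEnn : ∀ k, 0 ≤ Ek k) (hmono : Monotone Ek)
    (ρ : H →L[ℂ] H) (hpos : ρ.IsPositive)
    (htr : ∑' k, (inner ℂ (τ k) (ρ (τ k)) : ℂ).re = 1)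
    (E : ℝ)
    (hE : ∑' k, ENNReal.ofReal (Ek k * (inner ℂ (τ k) (ρ (τ k)) : ℂ).re)
      ≤ ENNReal.ofReal E)
    (P : ℕ → (H →L[ℂ] H))
    (hP : P = fun n => ∑ k ∈ Finset.range n, ((innerSL ℂ (τ k)).smulRight (τ k)))
    (t : ℕ → ℝ)  -- `t n = Tr(Pₙρ)`
    (ht : t = fun n => ∑ k ∈ Finset.range n, (inner ℂ (τ k) (ρ (τ k)) : ℂ).re)
    (ρn : ℕ → (H →L[ℂ] H))
    (hρn : ρn = fun n => ((t n)⁻¹ : ℂ) • (P n ∘L ρ ∘L P n)) :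
    (∀ n : ℕ, E ≤ Ek n → 0 < t n →
      ((ρn n).IsPositive ∧
        ∑' k, (inner ℂ (τ k) ((ρn n) (τ k)) : ℂ).re = 1 ∧
        ∑' k, ENNReal.ofReal (Ek k * (inner ℂ (τ k) ((ρn n) (τ k)) : ℂ).re)
          ≤ ENNReal.ofReal E)) ∧
    Tendsto (fun n => sSup {r : ℝ | ∃ B : H →L[ℂ] H, ‖B‖ ≤ 1 ∧
        r = ‖∑' k, (inner ℂ (τ k) (((ρ - ρn n) ∘L B) (τ k)) : ℂ)‖})
      atTop (nhds 0) := by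
  obtain rfl : P = fun n => τ.proj (range n) := hP
  subst hρn
  have htn (n : ℕ) : ∑ k ∈ range n, (⟪τ k, ρ (τ k)⟫_ℂ).re = t n := (congrFun ht n).symm
  refine ⟨fun n hEn htpos => ⟨τ.isPositive_inv_smul_compression hpos _ htpos.le,
    τ.tsum_re_inner_inv_smul_compression_apply_self ρ _ (htn n) htpos.ne',
    τ.tsum_ofReal_mul_re_inner_inv_smul_compression_le hpos hEnn _
      (fun k hk => hEn.trans (hmono (by simpa using hk))) htr hE (htn n) htpos⟩, ?_⟩
  obtain ⟨S, rfl⟩ :=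
    CStarAlgebra.nonneg_iff_eq_star_mul_self.mp ((nonneg_iff_isPositive ρ).mpr hpos)
  exact τ.tendsto_sSup_norm_tsum_inner_sub_inv_smul_compression S htr htn

/-- let `G = Σₖ Eₖ|τₖ⟩⟨τₖ|` be a discrete positive operator
(`Eₖ ↗ ∞`, `inf‖Gφ‖ = 0` on unit vectors is automatic for such spectra), and `Pₙ` the
spectral projection onto `span{τ₀,…,τ_{n−1}}`.  For any state `ρ` with `Tr Gρ ≤ E`
and any `n` with `Eₙ ≥ E` (and `Tr Pₙρ > 0`, so that the compression is defined),
the normalized compression `ρₙ = PₙρPₙ/Tr(Pₙρ)` is a state with `Tr Gρₙ ≤ E`, and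
`ρₙ → ρ` in trace norm (expressed via `sup_{‖B‖≤1}|Tr((ρ−ρₙ)B)| → 0`); traces are
computed in the eigenbasis `τ`. -/
theorem compressed_states_approximation
    {H : Type*} [NormedAddCommGroup H] [InnerProductSpace ℂ H] [CompleteSpace H]
    (τ : HilbertBasis ℕ ℂ H) (Ek : ℕ → ℝ)
    (hEnn : ∀ k, 0 ≤ Ek k) (hmono : Monotone Ek)
    (htop : Tendsto Ek atTop atTop)
    (ρ : H →L[ℂ] H) (hpos : ρ.IsPositive)
    (htr : ∑' k, (inner ℂ (τ k) (ρ (τ k)) : ℂ).re = 1)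
    (E : ℝ)
    (hE : ∑' k, ENNReal.ofReal (Ek k * (inner ℂ (τ k) (ρ (τ k)) : ℂ).re)
      ≤ ENNReal.ofReal E)
    (P : ℕ → (H →L[ℂ] H))
    (hP : P = fun n => ∑ k ∈ Finset.range n, ((innerSL ℂ (τ k)).smulRight (τ k)))
    (t : ℕ → ℝ)  -- `t n = Tr(Pₙρ)`
    (ht : t = fun n => ∑ k ∈ Finset.range n, (inner ℂ (τ k) (ρ (τ k)) : ℂ).re)
    (ρn : ℕ → (H →L[ℂ] H))
    (hρn : ρn = fun n => ((t n)⁻¹ : ℂ) • (P n ∘L ρ ∘L P n)) :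
    (∀ n : ℕ, E ≤ Ek n → 0 < t n →
      ((ρn n).IsPositive ∧
        ∑' k, (inner ℂ (τ k) ((ρn n) (τ k)) : ℂ).re = 1 ∧
        ∑' k, ENNReal.ofReal (Ek k * (inner ℂ (τ k) ((ρn n) (τ k)) : ℂ).re)
          ≤ ENNReal.ofReal E)) ∧
    Tendsto (fun n => sSup {r : ℝ | ∃ B : H →L[ℂ] H, ‖B‖ ≤ 1 ∧
        r = ‖∑' k, (inner ℂ (τ k) (((ρ - ρn n) ∘L B) (τ k)) : ℂ)‖})
      atTop (nhds 0) :=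
  compressed_states_approximation_general τ Ek hEnn hmono ρ hpos htr E hE P hP t ht ρn hρn

end
end

section
/- Let ‖A‖_{∘,E}^G = sup{‖Aφ‖ : φ ∈ D(√G), ‖φ‖ ≤ 1, ‖√G φ‖² ≤ E} and ‖A‖_E^G = sup{√(Σᵢ‖Aφᵢ‖²) : {φᵢ} ⊂ D(√G), Σᵢ‖φᵢ‖² ≤ 1, Σᵢ‖√G φᵢ‖² ≤ E}. Then ‖A‖_{∘,E}^G ≤ ‖A‖_E^G for every √G-bounded operator A and E > 0, with equality whenever E ↦ (‖A‖_{∘,E}^G)² is concave. -/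
noncomputable section

set_option maxHeartbeats 1000000

/-- let `A` be a `√G`-bounded operator (restricted to `D = D(√G)`), and
let `‖A‖_{∘,E}^G` and `‖A‖_E^G` be defined by expressions (11) and (10) of the paper:
`‖A‖_{∘,E}^G = sup{‖Aφ‖ : φ ∈ D(√G), ‖φ‖ ≤ 1, ‖√Gφ‖² ≤ E}` and
`‖A‖_E^G = sup{√(Σᵢ‖Aφᵢ‖²) : {φᵢ} ⊂ D(√G), Σᵢ‖φᵢ‖² ≤ 1, Σᵢ‖√Gφᵢ‖² ≤ E}`.
Then `‖A‖_{∘,E}^G ≤ ‖A‖_E^G` for all `E > 0`, with equality whenever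
`E ↦ (‖A‖_{∘,E}^G)²` is concave. -/
theorem circ_norm_le_eNorm_and_eq_of_concave
    {H : Type*} [NormedAddCommGroup H] [InnerProductSpace ℂ H] [CompleteSpace H]
    (D : Submodule ℂ H) (hdense : Dense (D : Set H))
    (sqrtG : D →ₗ[ℂ] H) (A : D →ₗ[ℂ] H)
    (a b : ℝ)
    (hrel : ∀ φ : D, ‖A φ‖ ^ 2 ≤ a ^ 2 * ‖(φ : H)‖ ^ 2 + b ^ 2 * ‖sqrtG φ‖ ^ 2)
    (ncirc nfull : ℝ → ℝ)
    (hncirc : ncirc = fun E => sSup {r : ℝ | ∃ φ : D,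
      ‖(φ : H)‖ ≤ 1 ∧ ‖sqrtG φ‖ ^ 2 ≤ E ∧ r = ‖A φ‖})
    (hnfull : nfull = fun E => sSup {r : ℝ | ∃ φ : ℕ → D,
      Summable (fun i => ‖(φ i : H)‖ ^ 2) ∧ Summable (fun i => ‖sqrtG (φ i)‖ ^ 2) ∧
      (∑' i, ‖(φ i : H)‖ ^ 2) ≤ 1 ∧ (∑' i, ‖sqrtG (φ i)‖ ^ 2) ≤ E ∧
      r = Real.sqrt (∑' i, ‖A (φ i)‖ ^ 2)}) :
    (∀ E > 0, ncirc E ≤ nfull E) ∧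
    (ConcaveOn ℝ (Set.Ioi 0) (fun E => (ncirc E) ^ 2) → ∀ E > 0, ncirc E = nfull E) := by
  classical
  subst hncirc hnfull
  -- notation for the two families of sets
  set S : ℝ → Set ℝ := fun E => {r : ℝ | ∃ φ : D,
      ‖(φ : H)‖ ≤ 1 ∧ ‖sqrtG φ‖ ^ 2 ≤ E ∧ r = ‖A φ‖} with hS
  set F : ℝ → Set ℝ := fun E => {r : ℝ | ∃ φ : ℕ → D,
      Summable (fun i => ‖(φ i : H)‖ ^ 2) ∧ Summable (fun i => ‖sqrtG (φ i)‖ ^ 2) ∧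
      (∑' i, ‖(φ i : H)‖ ^ 2) ≤ 1 ∧ (∑' i, ‖sqrtG (φ i)‖ ^ 2) ≤ E ∧
      r = Real.sqrt (∑' i, ‖A (φ i)‖ ^ 2)} with hF
  -- `0` belongs to every `S E` with `E ≥ 0`
  have hS0 : ∀ E : ℝ, 0 ≤ E → (0 : ℝ) ∈ S E := by
    intro E hE
    exact ⟨0, by simp, by simpa using hE, by simp⟩
  -- each `S E` is bounded above
  have hSbdd : ∀ E : ℝ, BddAbove (S E) := by
    intro E
    refine ⟨Real.sqrt (a ^ 2 + b ^ 2 * E), ?_⟩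
    rintro r ⟨φ, h1, h2, rfl⟩
    have h3 := hrel φ
    have hφ2 : ‖(φ : H)‖ ^ 2 ≤ 1 := by nlinarith [norm_nonneg (φ : H)]
    have h4 : ‖A φ‖ ^ 2 ≤ a ^ 2 + b ^ 2 * E := by
      nlinarith [sq_nonneg a, sq_nonneg b]
    calc ‖A φ‖ = Real.sqrt (‖A φ‖ ^ 2) := (Real.sqrt_sq (norm_nonneg _)).symm
      _ ≤ Real.sqrt (a ^ 2 + b ^ 2 * E) := Real.sqrt_le_sqrt h4
  have hSnn : ∀ E : ℝ, 0 ≤ E → 0 ≤ sSup (S E) := fun E hE => le_csSup (hSbdd E) (hS0 E hE)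
  have hSmono : ∀ E₁ E₂ : ℝ, 0 ≤ E₁ → E₁ ≤ E₂ → sSup (S E₁) ≤ sSup (S E₂) := by
    intro E₁ E₂ h1 h12
    refine csSup_le_csSup (hSbdd E₂) ⟨0, hS0 E₁ h1⟩ ?_
    rintro r ⟨φ, ha, hb, rfl⟩
    exact ⟨φ, ha, hb.trans h12, rfl⟩
  -- summability of `‖A φᵢ‖²`
  have hAsum : ∀ (φ : ℕ → D), Summable (fun i => ‖(φ i : H)‖ ^ 2) →
      Summable (fun i => ‖sqrtG (φ i)‖ ^ 2) → Summable (fun i => ‖A (φ i)‖ ^ 2) := by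
    intro φ h1 h2
    exact Summable.of_nonneg_of_le (fun i => sq_nonneg _) (fun i => hrel (φ i))
      ((h1.mul_left (a ^ 2)).add (h2.mul_left (b ^ 2)))
  -- each `F E`, `E ≥ 0`, is bounded above
  have hFbdd : ∀ E : ℝ, 0 ≤ E → BddAbove (F E) := by
    intro E hE
    refine ⟨Real.sqrt (a ^ 2 + b ^ 2 * E), ?_⟩
    rintro r ⟨φ, hs1, hs2, ht1, ht2, rfl⟩
    apply Real.sqrt_le_sqrt
    have hsum := hAsum φ hs1 hs2
    have hle : (∑' i, ‖A (φ i)‖ ^ 2) ≤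
        a ^ 2 * (∑' i, ‖(φ i : H)‖ ^ 2) + b ^ 2 * (∑' i, ‖sqrtG (φ i)‖ ^ 2) := by
      rw [← tsum_mul_left, ← tsum_mul_left, ← Summable.tsum_add (hs1.mul_left _) (hs2.mul_left _)]
      exact Summable.tsum_le_tsum (fun i => hrel (φ i)) hsum
        ((hs1.mul_left _).add (hs2.mul_left _))
    have htn : 0 ≤ (∑' i, ‖(φ i : H)‖ ^ 2) := tsum_nonneg fun i => sq_nonneg _
    have hgn : 0 ≤ (∑' i, ‖sqrtG (φ i)‖ ^ 2) := tsum_nonneg fun i => sq_nonneg _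
    nlinarith [sq_nonneg a, sq_nonneg b]
  -- `0` belongs to every `F E` with `E ≥ 0`
  have hF0 : ∀ E : ℝ, 0 ≤ E → (0 : ℝ) ∈ F E := by
    intro E hE
    refine ⟨fun _ => 0, by simpa using summable_zero, by simpa using summable_zero, by simp, by simpa using hE, by simp⟩
  -- Part 1: `sSup (S E) ≤ sSup (F E)`
  have hle : ∀ E > (0 : ℝ), sSup (S E) ≤ sSup (F E) := by
    intro E hE
    refine csSup_le_csSup (hFbdd E hE.le) ⟨0, hS0 E hE.le⟩ ?_
    rintro r ⟨φ, h1, h2, rfl⟩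
    refine ⟨fun i => if i = 0 then φ else 0, ?_, ?_, ?_, ?_, ?_⟩
    · have e : (fun i : ℕ => ‖((if i = 0 then φ else 0 : D) : H)‖ ^ 2) =
          fun i => if i = 0 then ‖(φ : H)‖ ^ 2 else 0 := by
        funext i; by_cases h : i = 0 <;> simp [h]
      rw [e]
      exact summable_of_ne_finset_zero (s := {0}) (by intro i hi; simp at hi; simp [hi])
    · have e : (fun i : ℕ => ‖sqrtG (if i = 0 then φ else 0 : D)‖ ^ 2) =
          fun i => if i = 0 then ‖sqrtG φ‖ ^ 2 else 0 := by
        funext i; by_cases h : i = 0 <;> simp [h]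
      rw [e]
      exact summable_of_ne_finset_zero (s := {0}) (by intro i hi; simp at hi; simp [hi])
    · have e : (fun i : ℕ => ‖((if i = 0 then φ else 0 : D) : H)‖ ^ 2) =
          fun i => if i = 0 then ‖(φ : H)‖ ^ 2 else 0 := by
        funext i; by_cases h : i = 0 <;> simp [h]
      rw [e, tsum_ite_eq]
      nlinarith [norm_nonneg (φ : H)]
    · have e : (fun i : ℕ => ‖sqrtG (if i = 0 then φ else 0 : D)‖ ^ 2) =
          fun i => if i = 0 then ‖sqrtG φ‖ ^ 2 else 0 := by
        funext i; by_cases h : i = 0 <;> simp [h]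
      rw [e, tsum_ite_eq]
      exact h2
    · have e : (fun i : ℕ => ‖A (if i = 0 then φ else 0 : D)‖ ^ 2) =
          fun i => if i = 0 then ‖A φ‖ ^ 2 else 0 := by
        funext i; by_cases h : i = 0 <;> simp [h]
      rw [e, tsum_ite_eq, Real.sqrt_sq (norm_nonneg _)]
  refine ⟨hle, ?_⟩
  intro hconc E hE
  refine le_antisymm (hle E hE) ?_
  -- the nontrivial direction: `sSup (F E) ≤ sSup (S E)`
  set f : ℝ → ℝ := fun x => (sSup (S x)) ^ 2 with hf
  have hfnn : ∀ x, 0 ≤ f x := fun x => sq_nonneg _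
  have hfmono : ∀ x₁ x₂ : ℝ, 0 ≤ x₁ → x₁ ≤ x₂ → f x₁ ≤ f x₂ := by
    intro x₁ x₂ h1 h12
    have := hSmono x₁ x₂ h1 h12
    have h0 := hSnn x₁ h1
    simp only [hf]
    nlinarith
  -- key pointwise bound
  have key : ∀ (χ : D) (x : ℝ), (χ : H) ≠ 0 → ‖sqrtG χ‖ ^ 2 ≤ x * ‖(χ : H)‖ ^ 2 →
      ‖A χ‖ ^ 2 ≤ ‖(χ : H)‖ ^ 2 * f x := by
    intro χ x hχ hx
    have hcpos : 0 < ‖(χ : H)‖ := norm_pos_iff.mpr hχ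
    set ψ : D := ((‖(χ : H)‖⁻¹ : ℝ) : ℂ) • χ with hψ
    have hnscal : ‖((‖(χ : H)‖⁻¹ : ℝ) : ℂ)‖ = ‖(χ : H)‖⁻¹ := by
      rw [Complex.norm_real, Real.norm_eq_abs, abs_of_nonneg (inv_nonneg.mpr hcpos.le)]
    have hψn : ‖(ψ : H)‖ = 1 := by
      rw [hψ, Submodule.coe_smul, norm_smul, hnscal, inv_mul_cancel₀ hcpos.ne']
    have hψg : ‖sqrtG ψ‖ ^ 2 ≤ x := by
      have hmapped : sqrtG ψ = ((‖(χ : H)‖⁻¹ : ℝ) : ℂ) • sqrtG χ := by rw [hψ, map_smul]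
      rw [hmapped, norm_smul, hnscal, mul_pow, inv_pow,
        inv_mul_le_iff₀ (by positivity : (0:ℝ) < ‖(χ : H)‖ ^ 2)]
      nlinarith [hx]
    have hmem : ‖A ψ‖ ∈ S x := ⟨ψ, le_of_eq hψn, hψg, rfl⟩
    have hsup : ‖A ψ‖ ≤ sSup (S x) := le_csSup (hSbdd x) hmem
    have hAψ : ‖A ψ‖ = ‖(χ : H)‖⁻¹ * ‖A χ‖ := by
      have hmapped : A ψ = ((‖(χ : H)‖⁻¹ : ℝ) : ℂ) • A χ := by rw [hψ, map_smul]
      rw [hmapped, norm_smul, hnscal]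
    have hAnn : 0 ≤ ‖A ψ‖ := norm_nonneg _
    have hAeq : ‖A χ‖ = ‖(χ : H)‖ * ‖A ψ‖ := by
      rw [hAψ]; field_simp
    rw [hAeq]
    simp only [hf]
    have h0 : (0:ℝ) ≤ sSup (S x) := hAnn.trans hsup
    nlinarith [mul_le_mul hsup hsup hAnn h0, sq_nonneg ‖(χ : H)‖, hcpos.le]
  -- now bound `sSup (F E)`
  refine csSup_le ⟨0, hF0 E hE.le⟩ ?_
  rintro r ⟨φ, hs1, hs2, ht1, ht2, rfl⟩
  set T : ℝ := ∑' i, ‖A (φ i)‖ ^ 2 with hT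
  have hsumA := hAsum φ hs1 hs2
  -- finite-sum bound
  have finbound : ∀ x : ℝ, E < x → ∀ s : Finset ℕ, (∑ i ∈ s, ‖A (φ i)‖ ^ 2) ≤ f x := by
    intro x hx s
    set n : ℕ → ℝ := fun i => ‖(φ i : H)‖ ^ 2 with hn
    set g : ℕ → ℝ := fun i => ‖sqrtG (φ i)‖ ^ 2 with hg
    set s' : Finset ℕ := s.filter (fun i => (φ i : H) ≠ 0) with hs'
    have hzero : ∀ i ∈ s, i ∉ s' → ‖A (φ i)‖ ^ 2 = 0 := by
      intro i hi hnot
      have : (φ i : H) = 0 := by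
        by_contra hcon
        exact hnot (Finset.mem_filter.mpr ⟨hi, hcon⟩)
      have hz : φ i = 0 := Subtype.ext this
      simp [hz]
    have hsumeq : (∑ i ∈ s', ‖A (φ i)‖ ^ 2) = ∑ i ∈ s, ‖A (φ i)‖ ^ 2 :=
      Finset.sum_subset (Finset.filter_subset _ s) hzero
    rw [← hsumeq]
    have hnpos : ∀ i ∈ s', 0 < n i := by
      intro i hi
      have := (Finset.mem_filter.mp hi).2
      have : 0 < ‖(φ i : H)‖ := norm_pos_iff.mpr this
      positivity
    set N : ℝ := ∑ i ∈ s', n i with hN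
    have hN1 : N ≤ 1 := by
      have h1 : (∑ i ∈ s', n i) ≤ ∑' i, n i := by
        apply Summable.sum_le_tsum s' (fun i _ => sq_nonneg _) hs1
      exact h1.trans ht1
    have hgE : (∑ i ∈ s', g i) ≤ E := by
      have h1 : (∑ i ∈ s', g i) ≤ ∑' i, g i := by
        apply Summable.sum_le_tsum s' (fun i _ => sq_nonneg _) hs2
      exact h1.trans ht2
    have hgnn : 0 ≤ ∑ i ∈ s', g i := Finset.sum_nonneg fun i _ => sq_nonneg _
    rcases Finset.eq_empty_or_nonempty s' with hemp | hne
    · rw [hemp]; simpa using hfnn x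
    have hNpos : 0 < N := Finset.sum_pos hnpos hne
    set δ : ℝ := x - E with hδ
    have hδpos : 0 < δ := by simp [hδ]; linarith
    set p : ℕ → ℝ := fun i => g i / n i + δ with hp
    have hw1 : (∑ i ∈ s', n i / N) = 1 := by
      rw [← Finset.sum_div, ← hN, div_self hNpos.ne']
    have hpmem : ∀ i ∈ s', p i ∈ Set.Ioi (0:ℝ) := by
      intro i hi
      have h1 : 0 ≤ g i / n i := div_nonneg (sq_nonneg _) (hnpos i hi).le
      simp only [Set.mem_Ioi, hp]
      linarith
    have jensen : (∑ i ∈ s', (n i / N) • f (p i)) ≤ f (∑ i ∈ s', (n i / N) • p i) :=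
      hconc.le_map_sum (fun i _ => div_nonneg (sq_nonneg _) hNpos.le) hw1 hpmem
    have hP : (∑ i ∈ s', (n i / N) • p i) = (∑ i ∈ s', g i) / N + δ := by
      have hterm : ∀ i ∈ s', (n i / N) • p i = g i / N + (n i / N) * δ := by
        intro i hi
        have hni : n i ≠ 0 := (hnpos i hi).ne'
        rw [smul_eq_mul, hp]
        field_simp
      rw [Finset.sum_congr rfl hterm, Finset.sum_add_distrib, ← Finset.sum_div,
        ← Finset.sum_mul, ← Finset.sum_div]
      rw [show (∑ i ∈ s', n i) / N = 1 from by rw [← hN, div_self hNpos.ne']]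
      ring
    -- per-term bound
    have hterm2 : ∀ i ∈ s', ‖A (φ i)‖ ^ 2 ≤ n i * f (p i) := by
      intro i hi
      have hni : n i ≠ 0 := (hnpos i hi).ne'
      have hineq : ‖sqrtG (φ i)‖ ^ 2 ≤ p i * ‖(φ i : H)‖ ^ 2 := by
        have h2 : g i ≤ p i * n i := by
          rw [hp]
          nlinarith [div_mul_cancel₀ (g i) hni, (hnpos i hi).le, hδpos.le]
        simpa [hg, hn] using h2
      exact key (φ i) (p i) (Finset.mem_filter.mp hi).2 hineq
    have step1 : (∑ i ∈ s', ‖A (φ i)‖ ^ 2) ≤ ∑ i ∈ s', n i * f (p i) :=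
      Finset.sum_le_sum hterm2
    have step2 : (∑ i ∈ s', n i * f (p i)) = N * ∑ i ∈ s', (n i / N) • f (p i) := by
      rw [Finset.mul_sum]
      refine Finset.sum_congr rfl fun i hi => ?_
      rw [smul_eq_mul]
      field_simp
    set P : ℝ := (∑ i ∈ s', g i) / N + δ with hPdef
    have hPpos : 0 < P := by
      have : 0 ≤ (∑ i ∈ s', g i) / N := div_nonneg hgnn hNpos.le
      simp only [hPdef]; linarith
    have step3 : N * f P ≤ f x := by
      rcases lt_or_eq_of_le hN1 with hlt | heq
      · -- N < 1 : pad with an extra point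
        set q : ℝ := (x - (∑ i ∈ s', g i) - N * δ) / (1 - N) with hq
        have h1N : 0 < 1 - N := by linarith
        have hqpos : 0 < q := by
          apply div_pos _ h1N
          have h3 : x - (∑ i ∈ s', g i) - N * δ = (E - (∑ i ∈ s', g i)) + (1 - N) * δ := by
            rw [hδ]; ring
          have h4 := mul_pos h1N hδpos
          rw [h3]
          linarith
        have hNP : N * P = (∑ i ∈ s', g i) + N * δ := by
          rw [hPdef]; field_simp
        have hq' : (1 - N) * q = x - (∑ i ∈ s', g i) - N * δ := by
          rw [hq]; field_simp
        have hcomb : N • P + (1 - N) • q = x := by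
          rw [smul_eq_mul, smul_eq_mul]; linarith
        have := hconc.2 (Set.mem_Ioi.mpr hPpos) (Set.mem_Ioi.mpr hqpos)
          hNpos.le h1N.le (by ring)
        rw [hcomb] at this
        have hfq : 0 ≤ f q := hfnn q
        rw [smul_eq_mul, smul_eq_mul] at this
        have h5 := mul_nonneg h1N.le hfq
        linarith
      · -- N = 1
        have hPx : P ≤ x := by
          have h3 : (∑ i ∈ s', g i) / N = ∑ i ∈ s', g i := by rw [heq, div_one]
          rw [hPdef, h3, hδ]
          linarith
        rw [heq, one_mul]
        exact hfmono P x hPpos.le hPx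
    calc (∑ i ∈ s', ‖A (φ i)‖ ^ 2) ≤ ∑ i ∈ s', n i * f (p i) := step1
      _ = N * ∑ i ∈ s', (n i / N) • f (p i) := step2
      _ ≤ N * f (∑ i ∈ s', (n i / N) • p i) := by
          exact mul_le_mul_of_nonneg_left jensen hNpos.le
      _ = N * f P := by rw [hP]
      _ ≤ f x := step3
  -- pass to the tsum
  have hTx : ∀ x : ℝ, E < x → T ≤ f x := by
    intro x hx
    exact Summable.tsum_le_of_sum_le hsumA (finbound x hx)
  -- take the limit `x → E⁺` using continuity of the concave function
  have hcont : ContinuousOn f (Set.Ioi 0) := hconc.continuousOn isOpen_Ioi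
  have htends : Filter.Tendsto f (nhdsWithin E (Set.Ioi E)) (nhds (f E)) := by
    have h1 : ContinuousWithinAt f (Set.Ioi 0) E := hcont E hE
    exact h1.mono (Set.Ioi_subset_Ioi hE.le)
  have hTE : T ≤ f E := by
    refine ge_of_tendsto htends ?_
    filter_upwards [eventually_mem_nhdsWithin] with x hx
    exact hTx x hx
  have hTnn : 0 ≤ T := tsum_nonneg fun i => sq_nonneg _
  calc Real.sqrt T ≤ Real.sqrt (f E) := Real.sqrt_le_sqrt hTE
    _ = sSup (S E) := by rw [hf, Real.sqrt_sq (hSnn E hE.le)]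

end
end
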